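/- For every integer n ≥ 5 and every real number x with 1 < x < 17/10, h_n(x) > 0. -/

import Mathlib

/-! Expanding in `t = 2n - 10 ≥ 0`, `h n x` is a quartic in `t` with constant term `h 5 x`.
Every coefficient of this quartic is a polynomial in `x` that is positive on `(1, 17/10)`,
so `h n x > 0` for all `n ≥ 5`. The one-variable inequalities are certified by
`nlinarith` from products of `x - 1` and `17/10 - x`. -/

noncomputable def h (n x : ℝ) : ℝ :=
  -512 + 256*(2*n-1)*x - 32*(38*n-75)*x^2
  + 192*(2*n-5)*(2*n-1)*x^3 - 6*(2*n-5)*(74*n-125)*x^4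
  + 43*(2*n-5)^2*(2*n-1)*x^5 - (2*n-5)^2*(63*n-94)*x^6
  + 3*(2*n-5)^3*(2*n-1)*x^7 - (2*n-5)^3*(3*n-4)*x^8

noncomputable def hCoeff₁ (x : ℝ) : ℝ :=
  x * (256 - 608*x + 2688*x^2 - 2580*x^3 + 4945*x^4 - 5995/2*x^5 + 2400*x^6 - 2025/2*x^7)

noncomputable def hCoeff₂ (x : ℝ) : ℝ :=
  x^3 * (192 - 222*x + 817*x^2 - 536*x^3 + 630*x^4 - 555/2*x^5)

noncomputable def hCoeff₃ (x : ℝ) : ℝ :=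
  x^5 * (43 - 63/2*x + 72*x^2 - 67/2*x^3)

noncomputable def hCoeff₄ (x : ℝ) : ℝ :=
  x^7 * (3 - 3/2*x)

theorem h_eq_expansion (n x : ℝ) :
    h n x = h 5 x + hCoeff₁ x * (2*n - 10) + hCoeff₂ x * (2*n - 10)^2
      + hCoeff₃ x * (2*n - 10)^3 + hCoeff₄ x * (2*n - 10)^4 := by
  unfold h hCoeff₁ hCoeff₂ hCoeff₃ hCoeff₄
  ring

section

variable {x : ℝ} (hx1 : 1 < x) (hx2 : x < 17/10)
include hx1 hx2

theorem h_five_pos : 0 < h 5 x := by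
  unfold h
  nlinarith [mul_pos (sub_pos.2 hx1) (sub_pos.2 hx2),
    mul_pos (mul_pos (sub_pos.2 hx1) (sub_pos.2 hx2)) (sub_pos.2 hx2),
    sq_nonneg (x^2 - 1), sq_nonneg (x^3 - 1), sq_nonneg (x^4 - 1)]

theorem hCoeff₁_pos : 0 < hCoeff₁ x := by
  refine mul_pos (by linarith) ?_
  nlinarith [mul_pos (sub_pos.2 hx1) (sub_pos.2 hx2),
    mul_pos (mul_pos (sub_pos.2 hx1) (sub_pos.2 hx2)) (sub_pos.2 hx2),
    sq_nonneg (x^2 - 1), sq_nonneg (x^3 - 1)]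

theorem hCoeff₂_pos : 0 < hCoeff₂ x := by
  refine mul_pos (by positivity) ?_
  nlinarith [mul_pos (sub_pos.2 hx1) (sub_pos.2 hx2),
    mul_pos (mul_pos (sub_pos.2 hx1) (sub_pos.2 hx2)) (sub_pos.2 hx2), sq_nonneg (x^2 - 1)]

theorem hCoeff₃_pos : 0 < hCoeff₃ x := by
  refine mul_pos (by positivity) ?_
  nlinarith [mul_pos (sub_pos.2 hx1) (sub_pos.2 hx2),
    mul_pos (mul_pos (sub_pos.2 hx1) (sub_pos.2 hx2)) (sub_pos.2 hx2)]

theorem hCoeff₄_pos : 0 < hCoeff₄ x :=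
  mul_pos (by positivity) (by linarith)

end

theorem stmt_5 (n : ℤ) (hn : 5 ≤ n) (x : ℝ) (hx1 : 1 < x) (hx2 : x < 17/10) :
    0 < h (n : ℝ) x := by
  have ht : (0 : ℝ) ≤ 2*n - 10 := by
    have : (5 : ℝ) ≤ n := by exact_mod_cast hn
    linarith
  rw [h_eq_expansion]
  have term₀ := h_five_pos hx1 hx2
  have term₁ := mul_nonneg (hCoeff₁_pos hx1 hx2).le ht
  have term₂ := mul_nonneg (hCoeff₂_pos hx1 hx2).le (pow_nonneg ht 2)
  have term₃ := mul_nonneg (hCoeff₃_pos hx1 hx2).le (pow_nonneg ht 3)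
  have term₄ := mul_nonneg (hCoeff₄_pos hx1 hx2).le (pow_nonneg ht 4)
  linarith
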